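/- Let Z, W be independent with Z ~ N(0,1), W ~ N(μ,1), and α ∈ (0, π/2). Define Λ = min( Z² + (1/2)(1 − sgn(W))W², sin²α·(Z + cot α·sgn(Z)·W)² ). As μ → ∞, Λ converges in distribution to the chi-squared distribution with 1 degree of freedom. -/

import Mathlib

/-!
Once `W cos α ≥ |Z|`, the statistic equals `Z²`: then `sgn W = 1` kills the extra term of the
first branch, and the second branch is `(sin α |Z| + cos α W)² ≥ Z²`. As `μ → ∞` this event has
probability tending to one, so `Λ → Z²` in probability, hence in distribution, and `Z² ~ χ²₁` by
the change of variables `y = x²` in the Gaussian density.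
-/

open MeasureTheory ProbabilityTheory Real Filter

/-- The chi-squared distribution with `k` degrees of freedom. -/
noncomputable def chiSq (k : ℝ) : Measure ℝ := gammaMeasure (k / 2) (1 / 2)

open scoped NNReal Topology BoundedContinuousFunction

section
variable {Ω ι : Type*} [MeasurableSpace Ω] {P : Measure Ω} {l : Filter ι}

lemma tendsto_measure_setOf_le_atTop [IsFiniteMeasure P] {Y : Ω → ℝ} (hY : AEMeasurable Y P) :
    Tendsto (fun M ↦ P {ω | M ≤ Y ω}) atTop (𝓝 0) := by
  have hempty : ⋂ M : ℝ, Y ⁻¹' Set.Ici M = ∅ :=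
    Set.eq_empty_of_forall_notMem fun ω hω ↦
      (lt_add_one (Y ω)).not_ge (Set.mem_iInter.1 hω (Y ω + 1))
  have hlim := tendsto_measure_iInter_atTop (fun M ↦ hY.nullMeasurable measurableSet_Ici)
    (fun _ _ hMN ↦ Set.preimage_mono (Set.Ici_subset_Ici.2 hMN)) ⟨0, measure_ne_top _ _⟩
  rwa [hempty, measure_empty] at hlim

lemma tendsto_measure_lt_of_forall_tendsto_measure_lt [IsFiniteMeasure P] {X : ι → Ω → ℝ}
    {Y : Ω → ℝ} (hY : AEMeasurable Y P)
    (hX : ∀ M, Tendsto (fun i ↦ P {ω | X i ω < M}) l (𝓝 0)) :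
    Tendsto (fun i ↦ P {ω | X i ω < Y ω}) l (𝓝 0) := by
  refine ENNReal.tendsto_nhds_zero.2 fun ε hε ↦ ?_
  have hε2 : 0 < ε / 2 := ENNReal.half_pos hε.ne'
  obtain ⟨M, hM⟩ := ((tendsto_measure_setOf_le_atTop hY).eventually (ge_mem_nhds hε2)).exists
  filter_upwards [(hX M).eventually (ge_mem_nhds hε2)] with i hi
  calc P {ω | X i ω < Y ω} ≤ P ({ω | X i ω < M} ∪ {ω | M ≤ Y ω}) :=
        measure_mono fun ω hω ↦ (lt_or_ge (X i ω) M).imp id fun h ↦ h.trans hω.le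
    _ ≤ ε / 2 + ε / 2 := (measure_union_le _ _).trans (add_le_add hi hM)
    _ = ε := ENNReal.add_halves ε

lemma tendstoInMeasure_of_tendsto_measure_ne {E : Type*} [PseudoEMetricSpace E]
    {X : ι → Ω → E} {Y : Ω → E}
    (h : Tendsto (fun i ↦ P {ω | X i ω ≠ Y ω}) l (𝓝 0)) : TendstoInMeasure P X l Y := by
  intro ε hε
  refine tendsto_of_tendsto_of_tendsto_of_le_of_le tendsto_const_nhds h (fun _ ↦ zero_le)
    fun i ↦ measure_mono fun ω hω hXY ↦ ?_
  simp_all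

lemma TendstoInMeasure.tendsto_integral_comp [IsProbabilityMeasure P] {E : Type*}
    [PseudoEMetricSpace E] [MeasurableSpace E] [BorelSpace E] [l.IsCountablyGenerated] [l.NeBot]
    {X : ι → Ω → E} {Y : Ω → E} (h : TendstoInMeasure P X l Y) (hX : ∀ i, AEMeasurable (X i) P)
    (f : E →ᵇ ℝ) : Tendsto (fun i ↦ ∫ ω, f (X i ω) ∂P) l (𝓝 (∫ ω, f (Y ω) ∂P)) := by
  have hconv := ProbabilityMeasure.tendsto_iff_forall_integral_tendsto.1
    (h.tendstoInDistribution hX).tendsto f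
  simp only [ProbabilityMeasure.coe_mk] at hconv
  have hmap {Z : Ω → E} (hZ : AEMeasurable Z P) : ∫ x, f x ∂P.map Z = ∫ ω, f (Z ω) ∂P :=
    integral_map hZ f.continuous.aestronglyMeasurable
  rw [hmap (h.aemeasurable hX)] at hconv
  exact hconv.congr fun i ↦ hmap (hX i)
end

lemma Real.monotone_sign : Monotone Real.sign := by
  intro x y hxy
  rcases lt_trichotomy x 0 with hx | rfl | hx <;> rcases lt_trichotomy y 0 with hy | rfl | hy <;>
    simp [Real.sign_of_neg, Real.sign_of_pos, *] <;> linarith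

@[fun_prop]
lemma Real.measurable_sign : Measurable Real.sign := Real.monotone_sign.measurable

lemma tendsto_gaussianReal_Iio_atTop (v : ℝ≥0) (a : ℝ) :
    Tendsto (fun μ ↦ gaussianReal μ v (Set.Iio a)) atTop (𝓝 0) := by
  have hshift (μ : ℝ) : gaussianReal μ v (Set.Iio a) = gaussianReal 0 v (Set.Iio (a - μ)) := by
    rw [← zero_add μ, ← gaussianReal_map_add_const,
      Measure.map_apply (measurable_add_const _) measurableSet_Iio]
    congr 1
    ext x
    simp [lt_sub_iff_add_lt]
  have hIio : Tendsto (fun b ↦ gaussianReal 0 v (Set.Iio b)) atBot (𝓝 0) := by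
    have hempty : ⋂ b : ℝ, Set.Iio b = ∅ :=
      Set.eq_empty_of_forall_notMem fun x hx ↦ lt_irrefl x (Set.mem_iInter.1 hx x)
    simpa [Function.comp_def, hempty] using tendsto_measure_iInter_atBot (μ := gaussianReal 0 v)
      (fun _ ↦ measurableSet_Iio.nullMeasurableSet) (fun _ _ ↦ Set.Iio_subset_Iio)
      ⟨0, measure_ne_top _ _⟩
  simp_rw [hshift]
  exact hIio.comp (tendsto_atBot_add_const_left _ a tendsto_neg_atTop_atBot)

lemma integral_gammaMeasure_eq_setIntegral_smul {E : Type*} [NormedAddCommGroup E]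
    [NormedSpace ℝ E] {a r : ℝ} (ha : 0 < a) (hr : 0 < r) (f : ℝ → E) :
    ∫ x, f x ∂(gammaMeasure a r) = ∫ x in Set.Ioi 0, gammaPDFReal a r x • f x := by
  rw [gammaMeasure, integral_withDensity_eq_integral_toReal_smul (f := gammaPDF a r)
    (measurable_gammaPDFReal a r).ennreal_ofReal (ae_of_all _ fun _ ↦ ENNReal.ofReal_lt_top)]
  simp only [gammaPDF, ENNReal.toReal_ofReal (gammaPDFReal_nonneg ha hr _)]
  rw [← integral_Ici_eq_integral_Ioi, setIntegral_eq_integral_of_forall_compl_eq_zero]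
  intro x hx
  simp [gammaPDFReal, show ¬ 0 ≤ x from hx]

lemma gaussianPDFReal_eq_mul_gammaPDFReal_sq {x : ℝ} (hx : 0 < x) :
    gaussianPDFReal 0 1 x = x * gammaPDFReal (1 / 2) (1 / 2) (x ^ 2) := by
  have hpow : (x ^ 2) ^ ((1:ℝ) / 2 - 1) = x⁻¹ := by
    rw [← Real.rpow_natCast, ← Real.rpow_mul hx.le]
    norm_num [Real.rpow_neg_one]
  rw [gaussianPDFReal, gammaPDFReal, if_pos (sq_nonneg x), hpow, Real.Gamma_one_half_eq,
    ← Real.sqrt_eq_rpow]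
  have hexp : -(x - 0) ^ 2 / (2 * ((1 : ℝ≥0) : ℝ)) = -(1 / 2 * x ^ 2) := by push_cast; ring
  rw [hexp, NNReal.coe_one, mul_one, Real.sqrt_mul zero_le_two, one_div, Real.sqrt_inv]
  field_simp

lemma integral_chiSq_one (f : ℝ → ℝ) :
    ∫ x, f x ∂(chiSq 1) = ∫ x, f (x ^ 2) ∂(gaussianReal 0 1) := by
  rw [chiSq, integral_gammaMeasure_eq_setIntegral_smul (by norm_num) (by norm_num),
    integral_gaussianReal_eq_integral_smul one_ne_zero, ← integral_comp_rpow_Ioi _ two_ne_zero]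
  have hIoi : ∀ x ∈ Set.Ioi (0 : ℝ),
      (|(2 : ℝ)| * x ^ ((2 : ℝ) - 1)) • gammaPDFReal (1 / 2) (1 / 2) (x ^ (2 : ℝ)) • f (x ^ (2 : ℝ))
        = 2 * (gaussianPDFReal 0 1 x • f (x ^ 2)) := by
    intro x hx
    rw [gaussianPDFReal_eq_mul_gammaPDFReal_sq hx, Real.rpow_two]
    norm_num [smul_eq_mul]
    ring
  have heven : ∀ x, gaussianPDFReal 0 1 |x| • f (|x| ^ 2) = gaussianPDFReal 0 1 x • f (x ^ 2) := by
    intro x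
    simp [gaussianPDFReal]
  rw [setIntegral_congr_fun measurableSet_Ioi hIoi, integral_const_mul, ← integral_comp_abs]
  simp only [heven]

noncomputable def lambdaT3 (α z w : ℝ) : ℝ :=
  min (z ^ 2 + 1 / 2 * (1 - Real.sign w) * w ^ 2)
    (Real.sin α ^ 2 * (z + Real.cos α / Real.sin α * Real.sign z * w) ^ 2)

lemma measurable_lambdaT3 (α : ℝ) : Measurable (Function.uncurry (lambdaT3 α)) := by
  unfold lambdaT3 Function.uncurry
  fun_prop

lemma lambdaT3_eq_sq {α z w : ℝ} (hs : 0 < sin α) (hc : 0 < cos α) (h : |z| ≤ w * cos α) :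
    lambdaT3 α z w = z ^ 2 := by
  have hw : 0 ≤ w := nonneg_of_mul_nonneg_left ((abs_nonneg z).trans h) hc
  rcases hw.eq_or_lt with rfl | hw
  · simp_all [lambdaT3]
  refine min_eq_left ?_ |>.trans (by simp [Real.sign_of_pos hw])
  rw [Real.sign_of_pos hw]
  rcases lt_trichotomy z 0 with hz | rfl | hz
  · rw [Real.sign_of_neg hz, abs_of_neg hz] at *
    have hlt : z * sin α - w * cos α ≤ z := by nlinarith
    field_simp
    nlinarith
  · simp
  · rw [Real.sign_of_pos hz, abs_of_pos hz] at *
    have hgt : z ≤ z * sin α + w * cos α := by nlinarith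
    field_simp
    nlinarith

theorem stmt_14_general {Ω : Type*} [MeasureSpace Ω] [IsProbabilityMeasure (ℙ : Measure Ω)]
    (Z : Ω → ℝ) (W : ℝ → Ω → ℝ) (α : ℝ) (hα : α ∈ Set.Ioo 0 (Real.pi / 2))
    (hZ : Measure.map Z ℙ = gaussianReal 0 1)
    (hW : ∀ μ : ℝ, Measure.map (W μ) ℙ = gaussianReal μ 1) :
    ∀ f : BoundedContinuousFunction ℝ ℝ,
      Tendsto (fun μ : ℝ =>
          ∫ ω, f (min
              (Z ω ^ 2 + (1 / 2) * (1 - Real.sign (W μ ω)) * (W μ ω) ^ 2)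
              (Real.sin α ^ 2 *
                (Z ω + (Real.cos α / Real.sin α) * Real.sign (Z ω) * W μ ω) ^ 2)) ∂ℙ)
        atTop (nhds (∫ x, f x ∂(chiSq 1))) := by
  have hs : 0 < sin α := sin_pos_of_pos_of_lt_pi hα.1 (by linarith [hα.2, pi_pos])
  have hc : 0 < cos α := cos_pos_of_mem_Ioo ⟨by linarith [hα.1, pi_pos], hα.2⟩
  have hZm : AEMeasurable Z ℙ := aemeasurable_of_map_neZero (by rw [hZ]; infer_instance)
  have hWm (μ : ℝ) : AEMeasurable (W μ) ℙ :=
    aemeasurable_of_map_neZero (by rw [hW μ]; infer_instance)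
  have hWlarge : Tendsto (fun μ ↦ ℙ {ω | W μ ω < |Z ω| / cos α}) atTop (𝓝 0) := by
    refine tendsto_measure_lt_of_forall_tendsto_measure_lt (hZm.abs.div_const _) fun M ↦ ?_
    have hlaw (μ : ℝ) : ℙ {ω | W μ ω < M} = gaussianReal μ 1 (Set.Iio M) := by
      rw [← hW μ, Measure.map_apply_of_aemeasurable (hWm μ) measurableSet_Iio]
      rfl
    simpa only [hlaw] using tendsto_gaussianReal_Iio_atTop 1 M
  have hconv : TendstoInMeasure ℙ (fun μ ω ↦ lambdaT3 α (Z ω) (W μ ω)) atTop (Z · ^ 2) := by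
    refine tendstoInMeasure_of_tendsto_measure_ne <|
      tendsto_of_tendsto_of_tendsto_of_le_of_le tendsto_const_nhds hWlarge (fun _ ↦ zero_le)
        fun μ ↦ measure_mono fun ω hne ↦ ?_
    by_contra hle
    exact hne (lambdaT3_eq_sq hs hc ((div_le_iff₀ hc).1 (not_lt.1 hle)))
  intro f
  rw [integral_chiSq_one, ← hZ, integral_map (f := fun x ↦ f (x ^ 2)) hZm (by fun_prop)]
  exact TendstoInMeasure.tendsto_integral_comp hconv
    (fun μ ↦ (measurable_lambdaT3 α).comp_aemeasurable (hZm.prodMk (hWm μ))) f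

/-- As `μ → ∞`, the model-T3 approximating statistic
`Λ_μ = min(Z² + (1/2)(1 − sgn W_μ) W_μ², sin²α (Z + cot α · sgn Z · W_μ)²)`
converges in distribution to `χ²₁`. -/
theorem stmt_14 {Ω : Type*} [MeasureSpace Ω] [IsProbabilityMeasure (ℙ : Measure Ω)]
    (Z : Ω → ℝ) (W : ℝ → Ω → ℝ) (α : ℝ) (hα : α ∈ Set.Ioo 0 (Real.pi / 2))
    (hZ : Measure.map Z ℙ = gaussianReal 0 1)
    (hW : ∀ μ : ℝ, Measure.map (W μ) ℙ = gaussianReal μ 1)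
    (hZW : ∀ μ : ℝ, IndepFun Z (W μ) ℙ) :
    ∀ f : BoundedContinuousFunction ℝ ℝ,
      Tendsto (fun μ : ℝ =>
          ∫ ω, f (min
              (Z ω ^ 2 + (1 / 2) * (1 - Real.sign (W μ ω)) * (W μ ω) ^ 2)
              (Real.sin α ^ 2 *
                (Z ω + (Real.cos α / Real.sin α) * Real.sign (Z ω) * W μ ω) ^ 2)) ∂ℙ)
        atTop (nhds (∫ x, f x ∂(chiSq 1))) :=
  stmt_14_general Z W α hα hZ hW
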